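/- Let ω be a section of τ* with d_ρω = 0, and for x ∈ M let ℒ_ω(x) = T_xω(ρ(E_x)) ⊆ T_{ω(x)}E* and [ℒ_ω(x)]⁰ its annihilator in T^♭_{ω(x)}E*. Then: (1) P([ℒ_ω(x)]⁰) = ℒ_ω(x) for all x if and only if d_ρω = 0; (2) if d_ρω = 0 then ker P_{ω(x)} ⊆ [ℒ_ω(x)]⁰. -/
import Mathlib


/- Trivialized model (see the file for statement 12): the almost Lie algebroid is given
by `R : 𝕄 → 𝔼 →L[ℝ] 𝕄` (anchor) and `C : 𝕄 → 𝔼 →L[ℝ] 𝔼 →L[ℝ] 𝔼` (bracket field), with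
associated sub almost Poisson morphism `P` characterized by
`⟨(df',u'), P σ (df,u)⟩ = ⟨ξ, C(u,u')⟩ + df'(R u) − df(R u')`.  A section `ω` of the
dual bundle is `z ↦ (z, ξ z)`; `ℒ_ω(x) = T_xω(ρ(E_x))` and `[ℒ_ω(x)]⁰` is its
annihilator in `T^♭_{ω(x)}E* ≅ 𝕄* × 𝔼`. -/

variable {𝕄 𝔼 : Type*} [NormedAddCommGroup 𝕄] [NormedSpace ℝ 𝕄]
  [NormedAddCommGroup 𝔼] [NormedSpace ℝ 𝔼]

noncomputable def flatCLM (η : (𝕄 →L[ℝ] ℝ) × 𝔼) : (𝕄 × (𝔼 →L[ℝ] ℝ)) →L[ℝ] ℝ :=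
  η.1.comp (ContinuousLinearMap.fst ℝ 𝕄 (𝔼 →L[ℝ] ℝ)) +
    (ContinuousLinearMap.apply ℝ ℝ η.2).comp (ContinuousLinearMap.snd ℝ 𝕄 (𝔼 →L[ℝ] ℝ))

/-- `ℒ_ω(x) = T_xω(ρ(E_x)) ⊆ T_{ω(x)}E*`. -/
noncomputable def Lomega (R : 𝕄 → 𝔼 →L[ℝ] 𝕄) (ξ : 𝕄 → 𝔼 →L[ℝ] ℝ) (x : 𝕄) :
    Set (𝕄 × (𝔼 →L[ℝ] ℝ)) :=
  {w | ∃ v : 𝔼, w = (R x v, fderiv ℝ ξ x (R x v))}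

/-- The annihilator `[ℒ_ω(x)]⁰ ⊆ T^♭_{ω(x)}E* ≅ 𝕄* × 𝔼`. -/
noncomputable def LomegaAnn (R : 𝕄 → 𝔼 →L[ℝ] 𝕄) (ξ : 𝕄 → 𝔼 →L[ℝ] ℝ) (x : 𝕄) :
    Set ((𝕄 →L[ℝ] ℝ) × 𝔼) :=
  {η | ∀ v : 𝔼, η.1 (R x v) + (fderiv ℝ ξ x (R x v)) η.2 = 0}

lemma flatCLM_apply (η : (𝕄 →L[ℝ] ℝ) × 𝔼) (w : 𝕄 × (𝔼 →L[ℝ] ℝ)) :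
    flatCLM η w = η.1 w.1 + w.2 η.2 := rfl

lemma eq_of_dual_eq {a b : 𝕄} (h : ∀ f : 𝕄 →L[ℝ] ℝ, f a = f b) : a = b := by
  by_contra hab
  obtain ⟨f, hf⟩ := SeparatingDual.exists_separating_of_ne (R := ℝ) hab
  exact hf (h f)

/-- (1) `P([ℒ_ω(x)]⁰) = ℒ_ω(x)` (for all `x`) iff `d_ρω = 0` (at all `x`);
(2) if `d_ρω = 0` then `ker P_{ω(x)} ⊆ [ℒ_ω(x)]⁰`. -/
theorem stmt13 (R : 𝕄 → 𝔼 →L[ℝ] 𝕄) (C : 𝕄 → 𝔼 →L[ℝ] 𝔼 →L[ℝ] 𝔼)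
    (P : 𝕄 × (𝔼 →L[ℝ] ℝ) → ((𝕄 →L[ℝ] ℝ) × 𝔼) →L[ℝ] 𝕄 × (𝔼 →L[ℝ] ℝ))
    (hP : ∀ (σ : 𝕄 × (𝔼 →L[ℝ] ℝ)) (df : 𝕄 →L[ℝ] ℝ) (u : 𝔼)
      (df' : 𝕄 →L[ℝ] ℝ) (u' : 𝔼),
      flatCLM (df', u') (P σ (df, u)) =
        σ.2 (C σ.1 u u') + df' (R σ.1 u) - df (R σ.1 u'))
    (ξ : 𝕄 → 𝔼 →L[ℝ] ℝ) (hξ : ContDiff ℝ (⊤ : ℕ∞) ξ) :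
    ((∀ x : 𝕄, P (x, ξ x) '' LomegaAnn R ξ x = Lomega R ξ x) ↔
      (∀ (x : 𝕄) (u v : 𝔼),
        fderiv ℝ ξ x (R x u) v - fderiv ℝ ξ x (R x v) u - ξ x (C x u v) = 0)) ∧
    ((∀ (x : 𝕄) (u v : 𝔼),
        fderiv ℝ ξ x (R x u) v - fderiv ℝ ξ x (R x v) u - ξ x (C x u v) = 0) →
      ∀ (x : 𝕄) (η : (𝕄 →L[ℝ] ℝ) × 𝔼),
        P (x, ξ x) η = 0 → η ∈ LomegaAnn R ξ x) := by
  have h2 : ∀ (x : 𝕄) (df : 𝕄 →L[ℝ] ℝ) (u u' : 𝔼),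
      (P (x, ξ x) (df, u)).2 u' = ξ x (C x u u') - df (R x u') := by
    intro x df u u'
    have := hP (x, ξ x) df u 0 u'
    simpa [flatCLM_apply] using this
  have h1 : ∀ (x : 𝕄) (df : 𝕄 →L[ℝ] ℝ) (u : 𝔼),
      (P (x, ξ x) (df, u)).1 = R x u := by
    intro x df u
    apply eq_of_dual_eq
    intro f
    have := hP (x, ξ x) df u f 0
    simpa [flatCLM_apply] using this
  constructor
  · constructor
    · -- image = Lomega → closed
      intro hIm x u v
      -- element (f, u) with f m = -(fderiv ξ x m) u
      set f : 𝕄 →L[ℝ] ℝ := -((ContinuousLinearMap.apply ℝ ℝ u).comp (fderiv ℝ ξ x)) with hf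
      have hfm : ∀ m : 𝕄, f m = -(fderiv ℝ ξ x m) u := fun m => rfl
      have hAnn : (f, u) ∈ LomegaAnn R ξ x := by
        intro w
        simp [LomegaAnn, hfm]
      have : P (x, ξ x) (f, u) ∈ Lomega R ξ x := by
        rw [← hIm x]; exact Set.mem_image_of_mem _ hAnn
      obtain ⟨v0, hv0⟩ := this
      have hfst : R x u = R x v0 := by
        have := congrArg Prod.fst hv0
        simpa [h1 x f u] using this
      have hsnd : (P (x, ξ x) (f, u)).2 = fderiv ℝ ξ x (R x u) := by
        have := congrArg Prod.snd hv0
        simp only at this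
        rw [this, ← hfst]
      have := congrArg (fun g : 𝔼 →L[ℝ] ℝ => g v) hsnd
      simp only [h2 x f u v, hfm] at this
      linarith
    · -- closed → image = Lomega
      intro hcl x
      ext w
      constructor
      · rintro ⟨⟨df, u⟩, hAnn, rfl⟩
        refine ⟨u, ?_⟩
        refine Prod.ext (h1 x df u) ?_
        ext u'
        have hA := hAnn u'
        have hc := hcl x u u'
        simp only [LomegaAnn, Set.mem_setOf_eq] at hA
        simp only [h2 x df u u']
        linarith
      · rintro ⟨v, rfl⟩
        set f : 𝕄 →L[ℝ] ℝ := -((ContinuousLinearMap.apply ℝ ℝ v).comp (fderiv ℝ ξ x)) with hf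
        have hfm : ∀ m : 𝕄, f m = -(fderiv ℝ ξ x m) v := fun m => rfl
        refine ⟨(f, v), ?_, ?_⟩
        · intro w; simp [LomegaAnn, hfm]
        · refine Prod.ext (h1 x f v) ?_
          ext u'
          have hc := hcl x v u'
          simp only [h2 x f v u', hfm]
          linarith
  · -- (2)
    intro hcl x η hker
    obtain ⟨df, u⟩ := η
    have hu : R x u = 0 := by
      rw [← h1 x df u, hker]; rfl
    intro v
    have hfRv : df (R x v) = ξ x (C x u v) := by
      have := h2 x df u v
      rw [hker] at this
      simp only [Prod.snd_zero, ContinuousLinearMap.zero_apply] at this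
      linarith
    have hc := hcl x u v
    rw [hu] at hc
    simp only [map_zero, ContinuousLinearMap.zero_apply, zero_sub] at hc
    rw [hfRv]
    linarith
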